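/- Let (G,c) be an edge-colored graph on n vertices that is edge-minimal subject to δ^c(G) ≥ n/2. Then every D_G-digraph D for (G,c) satisfies δ^+(D) > n/2 − √n. -/

import Mathlib

open SimpleGraph

/-- Number of distinct colors on edges incident to `v`. -/
noncomputable def colorDegree {V C : Type*} (G : SimpleGraph V) (c : Sym2 V → C) (v : V) : ℕ :=
  (c '' (G.incidenceSet v)).ncard

/-- The minimum color degree of `(G, c)` is at least `r`. -/
def MinColorDegreeGe {V C : Type*} (G : SimpleGraph V) (c : Sym2 V → C) (r : ℝ) : Prop :=
  ∀ v : V, r ≤ (colorDegree G c v : ℝ)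

/-- `(G, c)` is edge-minimal subject to `δ^c(G) ≥ n/2` where `n` is the number of vertices. -/
def EdgeMinimal {V C : Type*} [Fintype V] (G : SimpleGraph V) (c : Sym2 V → C) : Prop :=
  MinColorDegreeGe G c ((Fintype.card V : ℝ) / 2) ∧
  ∀ e ∈ G.edgeSet, ¬ MinColorDegreeGe (G.deleteEdges {e}) c ((Fintype.card V : ℝ) / 2)

/-- `d_{F_α}(v)`: the number of edges of color `α` incident to `v`. -/
noncomputable def monoDeg {V C : Type*} (G : SimpleGraph V) (c : Sym2 V → C) (α : C) (v : V) : ℕ :=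
  {w : V | G.Adj v w ∧ c s(v, w) = α}.ncard

/-- `D` is a `D_G`-digraph for `(G, c)`: for every color `α` and vertex `v` with
`1 ≤ d_{F_α}(v) ≤ √n`, exactly one arc `v → w` along an edge of color `α`, and no other arcs. -/
def IsDGDigraph {V C : Type*} [Fintype V] (G : SimpleGraph V) (c : Sym2 V → C)
    (D : V → V → Prop) : Prop :=
  (∀ v w, D v w → G.Adj v w) ∧
  (∀ v w w', D v w → D v w' → c s(v, w) = c s(v, w') → w = w') ∧
  (∀ v w, D v w → (monoDeg G c (c s(v, w)) v : ℝ) ≤ Real.sqrt (Fintype.card V)) ∧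
  (∀ v (α : C), 1 ≤ monoDeg G c α v → (monoDeg G c α v : ℝ) ≤ Real.sqrt (Fintype.card V) →
      ∃ w, D v w ∧ c s(v, w) = α)

/-- The bidirected graph `G*` of a digraph `D`: `{u,v}` is an edge iff both `uv` and `vu` are arcs. -/
def Gstar {V : Type*} (D : V → V → Prop) : SimpleGraph V where
  Adj u v := u ≠ v ∧ D u v ∧ D v u
  symm := ⟨fun u v h => ⟨h.1.symm, h.2.2, h.2.1⟩⟩
  loopless := ⟨fun v h => h.1 rfl⟩

/-- A rainbow path: a path whose edges receive pairwise distinct colors. -/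
def IsRainbowPath {V C : Type*} {G : SimpleGraph V} {u v : V} (c : Sym2 V → C)
    (p : G.Walk u v) : Prop :=
  p.IsPath ∧ (p.edges.map c).Nodup

/-- The number of arcs of `D` from `X` to `Y`. -/
noncomputable def arcsBetween {V : Type*} (D : V → V → Prop) (X Y : Set V) : ℕ :=
  {p : V × V | p.1 ∈ X ∧ p.2 ∈ Y ∧ D p.1 p.2}.ncard

/-- `β`-extremal of type 1 with respect to the digraph `D`. -/
def ExtremalType1 {V : Type*} (β : ℝ) (n : ℕ) (D : V → V → Prop) : Prop :=
  ∃ V1 V2 : Set V, V1 ∪ V2 = Set.univ ∧ Disjoint V1 V2 ∧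
    (1 / 2 - β) * n ≤ (V1.ncard : ℝ) ∧ (1 / 2 - β) * n ≤ (V2.ncard : ℝ) ∧
    ((arcsBetween D V1 V2 + arcsBetween D V2 V1 : ℕ) : ℝ) ≤ β * n ^ 2

/-- `β`-extremal of type 2 with respect to the digraph `D`. -/
def ExtremalType2 {V : Type*} (β : ℝ) (n : ℕ) (D : V → V → Prop) : Prop :=
  ((Gstar D).edgeSet.ncard : ℝ) ≤ β * n ^ 2

/-- `(G, c)` is rainbow `k`-connected. -/
def RainbowKConnected {V C : Type*} (G : SimpleGraph V) (c : Sym2 V → C) (k : ℕ) : Prop :=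
  ∀ u v : V, u ≠ v → ∃ p : Fin k → G.Walk u v,
    (∀ i, (p i).IsPath) ∧
    (∀ i j, i ≠ j → p i ≠ p j) ∧
    (∀ i j, i ≠ j → ∀ w, w ∈ (p i).support → w ∈ (p j).support → w = u ∨ w = v) ∧
    Set.InjOn c {e : Sym2 V | ∃ i, e ∈ (p i).edges}

/-- `F_α`: the spanning subgraph of `G` consisting of the edges of color `α`. -/
def monoSubgraph {V C : Type*} (G : SimpleGraph V) (c : Sym2 V → C) (α : C) : SimpleGraph V where
  Adj u v := G.Adj u v ∧ c s(u, v) = α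
  symm := by
    refine ⟨fun u v h => ?_⟩
    refine ⟨h.1.symm, ?_⟩
    rw [Sym2.eq_swap]
    exact h.2
  loopless := ⟨fun v h => G.loopless.irrefl v h.1⟩

/-- Density of the (ordered) pair `(A, B)` for the relation (digraph) `D`. -/
noncomputable def ddensity {V : Type*} (D : V → V → Prop) (A B : Set V) : ℝ :=
  (arcsBetween D A B : ℝ) / ((A.ncard : ℝ) * (B.ncard : ℝ))

/-- The pair `(A, B)` is `ε`-regular of density `d` for the relation (digraph) `D`. -/
def RegularPairRel {V : Type*} (D : V → V → Prop) (A B : Set V) (ε d : ℝ) : Prop :=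
  ∀ A' ⊆ A, ∀ B' ⊆ B, ε * A.ncard ≤ (A'.ncard : ℝ) → ε * B.ncard ≤ (B'.ncard : ℝ) →
    |ddensity D A' B' - d| ≤ ε

theorem statement3 (V C : Type) [Fintype V] (n : ℕ) (hn : Fintype.card V = n)
    (G : SimpleGraph V) (c : Sym2 V → C) (hmin : EdgeMinimal G c)
    (D : V → V → Prop) (hD : IsDGDigraph G c D) :
    ∀ v : V, (n : ℝ) / 2 - Real.sqrt n < (({w | D v w} : Set V).ncard : ℝ) := by
  classical
  intro v
  have hn1 : 1 ≤ n := by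
    rw [← hn]; exact Fintype.card_pos_iff.mpr ⟨v⟩
  have hn0 : (0:ℝ) < n := by exact_mod_cast hn1
  have hs0 : (0:ℝ) < Real.sqrt n := Real.sqrt_pos.mpr hn0
  set S : Set C := c '' G.incidenceSet v with hSdef
  have hSfin : S.Finite := (G.incidenceSet v).toFinite.image c
  -- every color in S has monoDeg ≥ 1
  have hmono1 : ∀ α ∈ S, 1 ≤ monoDeg G c α v := by
    rintro α ⟨e, ⟨heE, hve⟩, rfl⟩
    obtain ⟨w, rfl⟩ := Sym2.mem_iff_exists.mp hve
    have hadj : G.Adj v w := G.mem_edgeSet.mp heE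
    have hne : ({w' : V | G.Adj v w' ∧ c s(v,w') = c s(v,w)}).Nonempty := ⟨w, hadj, rfl⟩
    have := Set.ncard_pos (s := {w' : V | G.Adj v w' ∧ c s(v,w') = c s(v,w)})
      (Set.toFinite _)
    exact this.mpr hne
  set Big : Set C := {α ∈ S | Real.sqrt n < (monoDeg G c α v : ℝ)} with hBdef
  set Small : Set C := {α ∈ S | (monoDeg G c α v : ℝ) ≤ Real.sqrt n} with hSmdef
  have hBigfin : Big.Finite := hSfin.subset (Set.sep_subset _ _)
  have hSmallfin : Small.Finite := hSfin.subset (Set.sep_subset _ _)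
  have hsplit : S ⊆ Small ∪ Big := by
    intro α hα
    by_cases h : (monoDeg G c α v : ℝ) ≤ Real.sqrt n
    · exact Or.inl ⟨hα, h⟩
    · exact Or.inr ⟨hα, lt_of_not_ge h⟩
  have hcardsplit : S.ncard ≤ Small.ncard + Big.ncard :=
    le_trans (Set.ncard_le_ncard hsplit (hSmallfin.union hBigfin))
      (Set.ncard_union_le _ _)
  -- Small injects into out-neighborhood
  have hex : ∀ α ∈ Small, ∃ w, D v w ∧ c s(v, w) = α := by
    intro α hα
    have h1 : 1 ≤ monoDeg G c α v := hmono1 α hα.1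
    have h2 : (monoDeg G c α v : ℝ) ≤ Real.sqrt (Fintype.card V) := by
      rw [hn]; exact hα.2
    exact hD.2.2.2 v α h1 h2
  have hsmall_le : Small.ncard ≤ ({w | D v w} : Set V).ncard := by
    set f : C → V := fun α =>
      if h : ∃ w, D v w ∧ c s(v, w) = α then h.choose else v with hfdef
    have hfspec : ∀ α ∈ Small, D v (f α) ∧ c s(v, f α) = α := by
      intro α hα
      have h := hex α hα
      simp only [hfdef, dif_pos h]
      exact h.choose_spec
    refine Set.ncard_le_ncard_of_injOn f (fun α hα => (hfspec α hα).1) ?_ (Set.toFinite _)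
    intro α hα α' hα' hff
    have h1 := (hfspec α hα).2
    have h2 := (hfspec α' hα').2
    rw [← h1, ← h2, hff]
  -- Bound on Big
  set g : C → Finset V := fun α => Finset.univ.filter (fun w => G.Adj v w ∧ c s(v,w) = α)
    with hgdef
  have hgcard : ∀ α, (g α).card = monoDeg G c α v := by
    intro α
    rw [monoDeg, ← Set.ncard_coe_finset (g α)]
    congr 1
    ext w
    simp [hgdef]
  have hBiglt : (Big.ncard : ℝ) < Real.sqrt n := by
    have hkey : (Big.ncard : ℝ) * Real.sqrt n < n := by
      rcases Big.eq_empty_or_nonempty with hB | hB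
      · simp [hB, hn0]
      · set B : Finset C := hBigfin.toFinset with hBfdef
        have hBne : B.Nonempty := by
          rw [hBfdef, Set.Finite.toFinset_nonempty]; exact hB
        have hdisj : ∀ α ∈ B, ∀ α' ∈ B, α ≠ α' → Disjoint (g α) (g α') := by
          intro α _ α' _ hne
          rw [Finset.disjoint_left]
          intro w hw hw'
          simp only [hgdef, Finset.mem_filter] at hw hw'
          exact hne (hw.2.2 ▸ hw'.2.2 ▸ rfl)
        have hsum_le : ∑ α ∈ B, (g α).card ≤ n := by
          rw [← Finset.card_biUnion hdisj, ← hn]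
          exact Finset.card_le_univ _
        have hc : Big.ncard = B.card := Set.ncard_eq_toFinset_card Big hBigfin
        have hterm : ∀ α ∈ B, Real.sqrt n < ((g α).card : ℝ) := by
          intro α hα
          rw [hBfdef, Set.Finite.mem_toFinset] at hα
          rw [hgcard]
          exact hα.2
        have hlt : (Big.ncard : ℝ) * Real.sqrt n < ∑ α ∈ B, ((g α).card : ℝ) := by
          calc (Big.ncard : ℝ) * Real.sqrt n = ∑ _α ∈ B, Real.sqrt n := by
                rw [Finset.sum_const, nsmul_eq_mul, hc]
            _ < ∑ α ∈ B, ((g α).card : ℝ) := Finset.sum_lt_sum_of_nonempty hBne hterm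
        have hsum_le' : (∑ α ∈ B, ((g α).card : ℝ)) ≤ n := by
          push_cast [← Nat.cast_sum]
          exact_mod_cast hsum_le
        linarith
    have hsq : Real.sqrt n * Real.sqrt n = (n : ℝ) := Real.mul_self_sqrt hn0.le
    exact lt_of_mul_lt_mul_right (by rw [hsq]; exact hkey) hs0.le
  -- conclude
  have hS2 : (n : ℝ) / 2 ≤ (S.ncard : ℝ) := by
    have := hmin.1 v
    rw [hn] at this
    exact this
  have h1 : (S.ncard : ℝ) ≤ (Small.ncard : ℝ) + (Big.ncard : ℝ) := by exact_mod_cast hcardsplit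
  have h2 : (Small.ncard : ℝ) ≤ (({w | D v w} : Set V).ncard : ℝ) := by exact_mod_cast hsmall_le
  linarith
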